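/- Let A be a symmetric n×n real matrix with nonnegative entries and zero diagonal (a weighted graph G), with degrees d_i = Σ_j a_{ij} ordered so that d_1 ≤ d_2 ≤ … ≤ d_n, and Laplacian L = D − A. Let a = max_{i,j} a_{ij} be the maximal edge weight. For 1 ≤ m ≤ n−1, let δ(G_{S_m}) = min_{1 ≤ i ≤ m} Σ_{1 ≤ j ≤ m} a_{ij} be the minimum degree of the subgraph induced on the m vertices of smallest degree. Then the (m+1)-th smallest eigenvalue of L satisfies λ_{m+1}(G) ≤ d_m + m·a − δ(G_{S_m}). -/

import Mathlib

/-!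
By the min-max principle, `λ_{m+1} ≤ K` as soon as `xᵀ L x ≤ K ‖x‖²` on some `(m+1)`-dimensional
subspace. Take the vectors that are constant off `S = {v_1, …, v_m}`, and write such a vector as
`x = y + c 𝟙` with `y` supported on `S`; then `xᵀ L x = yᵀ L y = ½ ∑ a_ij (y_i - y_j)²`.
Splitting the edges into those inside `S` and those leaving `S` gives
`yᵀ L y ≤ K ‖y‖² - a (∑ y)²` with `K = d_m + m a - δ(G_{S_m})`, and bounding every weight by `a`
gives `yᵀ L y ≤ a (n ‖y‖² - (∑ y)²)`. Minimizing `‖y + c 𝟙‖²` over `c`, these two bounds yield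
`yᵀ L y ≤ K ‖y + c 𝟙‖²`.
-/

open Finset Module Matrix RCLike
open scoped InnerProductSpace

namespace LinearMap.IsSymmetric

variable {𝕜 E : Type*} [RCLike 𝕜] [NormedAddCommGroup E] [InnerProductSpace 𝕜 E]
  [FiniteDimensional 𝕜 E] {T : E →ₗ[𝕜] E} {n : ℕ}

theorem re_inner_apply_self_eq_sum (hT : T.IsSymmetric) (hn : finrank 𝕜 E = n) (x : E) :
    re ⟪T x, x⟫_𝕜 = ∑ i, hT.eigenvalues hn i * ‖(hT.eigenvectorBasis hn).repr x i‖ ^ 2 := by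
  rw [← (hT.eigenvectorBasis hn).repr.inner_map_map, PiLp.inner_apply, map_sum]
  refine sum_congr rfl fun i _ => ?_
  rw [hT.eigenvectorBasis_apply_self_apply, RCLike.inner_apply', map_mul (starRingEnd 𝕜),
    conj_ofReal, mul_assoc, RCLike.conj_mul, ← ofReal_pow, ← ofReal_mul, ofReal_re]

theorem norm_sq_eq_sum (hT : T.IsSymmetric) (hn : finrank 𝕜 E = n) (x : E) :
    ‖x‖ ^ 2 = ∑ i, ‖(hT.eigenvectorBasis hn).repr x i‖ ^ 2 := by
  rw [← (hT.eigenvectorBasis hn).repr.norm_map, EuclideanSpace.norm_sq_eq]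

theorem finrank_le_card_eigenvalues_le (hT : T.IsSymmetric) (hn : finrank 𝕜 E = n) {K : ℝ}
    {V : Submodule 𝕜 E} (hV : ∀ x ∈ V, re ⟪T x, x⟫_𝕜 ≤ K * ‖x‖ ^ 2) :
    finrank 𝕜 V ≤ #{i | hT.eigenvalues hn i ≤ K} := by
  set b := hT.eigenvectorBasis hn
  set low : Finset (Fin n) := {i | hT.eigenvalues hn i ≤ K}
  set U := Submodule.span 𝕜 (Set.range fun i : low => b i)
  have hU : finrank 𝕜 U ≤ #low := (finrank_range_le_card _).trans (Fintype.card_coe low).le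
  -- on `Uᗮ` the quadratic form exceeds `K ‖x‖²` except at `0`
  have hdisj : V ⊓ Uᗮ = ⊥ := by
    refine (Submodule.eq_bot_iff _).2 fun x hx => ?_
    obtain ⟨hxV, hxU⟩ := Submodule.mem_inf.1 hx
    have hlow : ∀ i ∈ low, b.repr x i = 0 := fun i hi => by
      rw [b.repr_apply_apply]
      exact Submodule.inner_right_of_mem_orthogonal
        (Submodule.subset_span (Set.mem_range_self (⟨i, hi⟩ : low))) hxU
    have hhigh : ∀ i ∉ low, K < hT.eigenvalues hn i := fun i hi => by simpa [low] using hi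
    have hterm : ∀ i, 0 ≤ (hT.eigenvalues hn i - K) * ‖b.repr x i‖ ^ 2 := fun i => by
      by_cases hi : i ∈ low
      · simp [hlow i hi]
      · exact mul_nonneg (sub_nonneg.2 (hhigh i hi).le) (sq_nonneg _)
    have hsum : ∑ i, (hT.eigenvalues hn i - K) * ‖b.repr x i‖ ^ 2 ≤ 0 := by
      have := hV x hxV
      rw [hT.re_inner_apply_self_eq_sum hn, hT.norm_sq_eq_sum hn, mul_sum] at this
      simpa only [sub_mul, sum_sub_distrib, sub_nonpos] using this
    have hzero : ∀ i, b.repr x i = 0 := fun i => by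
      by_cases hi : i ∈ low
      · exact hlow i hi
      · have hK : hT.eigenvalues hn i - K ≠ 0 := sub_ne_zero.2 (hhigh i hi).ne'
        have := (sum_eq_zero_iff_of_nonneg fun i _ => hterm i).1
          (hsum.antisymm (sum_nonneg fun i _ => hterm i)) i (mem_univ i)
        simpa [hK] using this
    exact b.repr.map_eq_zero_iff.1 (by ext i; exact hzero i)
  have hsup := Submodule.finrank_sup_add_finrank_inf_eq V Uᗮ
  rw [hdisj, finrank_bot] at hsup
  have hsup_le := Submodule.finrank_le (V ⊔ Uᗮ)
  have hcompl := U.finrank_add_finrank_orthogonal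
  omega

end LinearMap.IsSymmetric

theorem Matrix.IsHermitian.finrank_le_card_eigenvalues₀_le {ι : Type*} [Fintype ι] [DecidableEq ι]
    {L : Matrix ι ι ℝ} (hL : L.IsHermitian) {K : ℝ} {V : Submodule ℝ (ι → ℝ)}
    (hV : ∀ x ∈ V, x ⬝ᵥ L *ᵥ x ≤ K * (x ⬝ᵥ x)) :
    finrank ℝ V ≤ #{i | hL.eigenvalues₀ i ≤ K} := by
  rw [← (WithLp.linearEquiv 2 ℝ (ι → ℝ)).symm.finrank_map_eq V]
  refine (isSymmetric_toEuclideanLin_iff.mpr hL).finrank_le_card_eigenvalues_le _ ?_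
  rintro _ ⟨x, hx, rfl⟩
  have hnorm : ‖WithLp.toLp 2 x‖ ^ 2 = x ⬝ᵥ x := by
    rw [EuclideanSpace.norm_sq_eq]
    simp [dotProduct, sq]
  change re ⟪toEuclideanLin L (WithLp.toLp 2 x), WithLp.toLp 2 x⟫_ℝ ≤ K * ‖WithLp.toLp 2 x‖ ^ 2
  rw [hnorm, toLpLin_toLp, EuclideanSpace.inner_toLp_toLp, star_trivial, RCLike.re_to_real,
    toLin'_apply]
  exact hV x hx

theorem Finset.card_filter_eq_of_map_eq {ι κ α : Type*} [Fintype ι] [Fintype κ] {f : ι → α}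
    {g : κ → α} (h : univ.val.map f = univ.val.map g) (p : α → Prop) [DecidablePred p] :
    #{i | p (f i)} = #{j | p (g j)} := by
  calc #{i | p (f i)} = (univ.val.map f).countP p := (Multiset.countP_map _ _ _).symm
    _ = (univ.val.map g).countP p := by rw [h]
    _ = #{j | p (g j)} := Multiset.countP_map _ _ _

theorem Monotone.le_of_lt_card_filter_le {α : Type*} [LinearOrder α] {n : ℕ} {f : Fin n → α}
    (hf : Monotone f) {K : α} {i : Fin n} (hi : i.val < #{j | f j ≤ K}) : f i ≤ K := by
  by_contra! hlt
  have hsub : ({j | f j ≤ K} : Finset (Fin n)) ⊆ Iio i := fun j hj => by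
    simp only [mem_filter, mem_univ, true_and, mem_Iio] at hj ⊢
    by_contra! hij
    exact (hlt.trans_le (hf hij)).not_ge hj
  have hcard := card_le_card hsub
  rw [Fin.card_Iio] at hcard
  omega

theorem Matrix.IsHermitian.le_of_lt_finrank {n : ℕ} {L : Matrix (Fin n) (Fin n) ℝ}
    (hL : L.IsHermitian) {eigs : Fin n → ℝ} (heigs : Monotone eigs)
    (hroots : L.charpoly.roots = univ.val.map eigs) {K : ℝ} {V : Submodule ℝ (Fin n → ℝ)}
    (hV : ∀ x ∈ V, x ⬝ᵥ L *ᵥ x ≤ K * (x ⬝ᵥ x)) {k : Fin n} (hk : k.val < finrank ℝ V) :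
    eigs k ≤ K := by
  have hspec : univ.val.map eigs = univ.val.map hL.eigenvalues₀ := by
    simpa only [← hroots, RCLike.ofReal_real_eq_id, Function.id_comp]
      using hL.roots_charpoly_eq_eigenvalues₀
  refine heigs.le_of_lt_card_filter_le ?_
  rw [card_filter_eq_of_map_eq hspec (· ≤ K)]
  exact hk.trans_le (hL.finrank_le_card_eigenvalues₀_le hV)

theorem exists_finrank_eq_card_add_one_of_notMem {K ι : Type*} [Field K] [Fintype ι]
    {S : Finset ι} {i₀ : ι} (hi₀ : i₀ ∉ S) :
    ∃ V : Submodule K (ι → K), finrank K V = #S + 1 ∧ ∀ x ∈ V, ∃ c, ∀ i ∉ S, x i = c := by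
  let f : ((S → K) × K) →ₗ[K] ι → K :=
    (Function.ExtendByZero.linearMap K ((↑) : S → ι)).coprod (LinearMap.toSpanSingleton K _ 1)
  have hf_out : ∀ v i, i ∉ S → f v i = v.2 := fun v i hi => by
    have hext : Function.extend ((↑) : S → ι) v.1 0 i = 0 :=
      Function.extend_apply' _ _ _ (by rintro ⟨j, rfl⟩; exact hi j.2)
    simp [f, hext]
  have hf_in : ∀ v (i : S), f v i = v.1 i + v.2 := fun v i => by simp [f]
  have hinj : Function.Injective f := by
    rw [← LinearMap.ker_eq_bot, LinearMap.ker_eq_bot']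
    rintro ⟨z, c⟩ h
    have hc : c = 0 := by simpa [hf_out _ _ hi₀] using congrFun h i₀
    subst hc
    ext i
    · simpa [hf_in] using congrFun h i
    · rfl
  refine ⟨LinearMap.range f, ?_, ?_⟩
  · rw [LinearMap.finrank_range_of_inj hinj]
    simp
  · rintro _ ⟨v, rfl⟩
    exact ⟨v.2, hf_out v⟩

section WeightedLaplacian

variable {ι : Type*}

def weightedLaplacian [Fintype ι] [DecidableEq ι] (A : Matrix ι ι ℝ) : Matrix ι ι ℝ :=
  Matrix.diagonal (fun i => ∑ j, A i j) - A

theorem sum_sum_mul_sub_sq {A : ι → ι → ℝ} (hA : ∀ i j, A j i = A i j) (S : Finset ι)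
    (y : ι → ℝ) :
    ∑ i ∈ S, ∑ j ∈ S, A i j * (y i - y j) ^ 2
      = 2 * (∑ i ∈ S, (∑ j ∈ S, A i j) * y i ^ 2 - ∑ i ∈ S, ∑ j ∈ S, A i j * (y i * y j)) := by
  have hswap : ∑ i ∈ S, ∑ j ∈ S, A i j * y j ^ 2 = ∑ i ∈ S, (∑ j ∈ S, A i j) * y i ^ 2 := by
    rw [sum_comm]
    simp_rw [sum_mul, hA]
  calc ∑ i ∈ S, ∑ j ∈ S, A i j * (y i - y j) ^ 2
      = ∑ i ∈ S, ∑ j ∈ S, (A i j * y i ^ 2 + A i j * y j ^ 2 - 2 * (A i j * (y i * y j))) :=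
        sum_congr rfl fun i _ => sum_congr rfl fun j _ => by ring
    _ = _ := by
        simp_rw [sum_sub_distrib, sum_add_distrib, ← mul_sum, ← sum_mul, hswap]
        ring

theorem sum_sum_mul_sub_sq_le {A : ι → ι → ℝ} {a : ℝ} (ha : ∀ i j, A i j ≤ a) (S : Finset ι)
    (y : ι → ℝ) :
    ∑ i ∈ S, ∑ j ∈ S, A i j * (y i - y j) ^ 2
      ≤ 2 * a * (#S * ∑ i ∈ S, y i ^ 2 - (∑ i ∈ S, y i) ^ 2) := by
  calc ∑ i ∈ S, ∑ j ∈ S, A i j * (y i - y j) ^ 2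
      ≤ a * ∑ i ∈ S, ∑ j ∈ S, 1 * (y i - y j) ^ 2 := by
        simp_rw [mul_sum, ← mul_assoc, mul_one]
        gcongr with i _ j _
        exact ha i j
    _ = _ := by
        rw [sum_sum_mul_sub_sq (fun _ _ => rfl)]
        simp_rw [sum_const, nsmul_eq_mul, mul_one, one_mul, sq, ← mul_sum, ← sum_mul]
        ring

theorem le_mul_sum_add_const_sq [Fintype ι] [Nonempty ι] {y : ι → ℝ} {Q K a : ℝ} (hK : 0 ≤ K)
    (hQa : Q ≤ a * (Fintype.card ι * ∑ i, y i ^ 2 - (∑ i, y i) ^ 2))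
    (hQK : Q ≤ K * ∑ i, y i ^ 2 - a * (∑ i, y i) ^ 2) (c : ℝ) :
    Q ≤ K * ∑ i, (y i + c) ^ 2 := by
  set n : ℝ := (Fintype.card ι : ℝ)
  set N := ∑ i, y i ^ 2
  set s := ∑ i, y i
  have hn : 0 < n := by positivity
  have hCS : s ^ 2 ≤ n * N := by
    simpa [n, N, s] using sq_sum_le_card_mul_sum_sq (s := univ) (f := y)
  have hsum : ∑ i, (y i + c) ^ 2 = N + 2 * c * s + n * c ^ 2 := by
    have hterm : ∀ i, (y i + c) ^ 2 = y i ^ 2 + 2 * c * y i + c ^ 2 := fun i => by ring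
    simp only [hterm, sum_add_distrib, ← mul_sum, sum_const, card_univ, nsmul_eq_mul, N, s, n]
  -- minimizing over `c`, it suffices that `n Q ≤ K (n N - s²)`
  have hmin : n * Q ≤ K * (n * N - s ^ 2) := by
    rcases le_total K (n * a) with h | h
    · nlinarith
    · nlinarith
  rw [hsum]
  nlinarith [sq_nonneg (n * c + s), mul_nonneg hK (sq_nonneg (n * c + s))]

variable [Fintype ι] [DecidableEq ι] {A : Matrix ι ι ℝ}

theorem isHermitian_weightedLaplacian (hA : A.IsSymm) : (weightedLaplacian A).IsHermitian :=
  (isHermitian_diagonal _).sub (isHermitian_iff_isSymm.2 hA)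

theorem dotProduct_weightedLaplacian_mulVec (x : ι → ℝ) :
    x ⬝ᵥ weightedLaplacian A *ᵥ x
      = ∑ i, (∑ j, A i j) * x i ^ 2 - ∑ i, ∑ j, A i j * (x i * x j) := by
  rw [weightedLaplacian, sub_mulVec, dotProduct_sub]
  simp only [dotProduct, mulVec_diagonal]
  simp only [mulVec, dotProduct, mul_sum]
  congr 1
  · exact sum_congr rfl fun i _ => by ring
  · exact sum_congr rfl fun i _ => sum_congr rfl fun j _ => by ring

theorem dotProduct_weightedLaplacian_mulVec_eq_sum_sq (hA : A.IsSymm) (x : ι → ℝ) :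
    x ⬝ᵥ weightedLaplacian A *ᵥ x = (∑ i, ∑ j, A i j * (x i - x j) ^ 2) / 2 := by
  rw [sum_sum_mul_sub_sq (fun i j => hA.apply i j), dotProduct_weightedLaplacian_mulVec]
  ring

theorem dotProduct_weightedLaplacian_mulVec_le_card (hA : A.IsSymm) {a : ℝ}
    (ha : ∀ i j, A i j ≤ a) (x : ι → ℝ) :
    x ⬝ᵥ weightedLaplacian A *ᵥ x ≤ a * (Fintype.card ι * ∑ i, x i ^ 2 - (∑ i, x i) ^ 2) := by
  rw [dotProduct_weightedLaplacian_mulVec_eq_sum_sq hA]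
  have h := sum_sum_mul_sub_sq_le ha univ x
  rw [card_univ] at h
  linarith

theorem dotProduct_weightedLaplacian_mulVec_le_of_support (hA : A.IsSymm) {a D δ : ℝ}
    (ha : ∀ i j, A i j ≤ a) {S : Finset ι} (hD : ∀ i ∈ S, ∑ j, A i j ≤ D)
    (hδ : ∀ i ∈ S, δ ≤ ∑ j ∈ S, A i j) {x : ι → ℝ} (hx : ∀ i ∉ S, x i = 0) :
    x ⬝ᵥ weightedLaplacian A *ᵥ x ≤ (D + #S * a - δ) * ∑ i, x i ^ 2 - a * (∑ i, x i) ^ 2 := by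
  have hsupp : ∀ f : ι → ℝ, (∀ i ∉ S, f i = 0) → ∑ i ∈ S, f i = ∑ i, f i := fun f hf =>
    sum_subset (subset_univ S) fun i _ hi => hf i hi
  have hdeg : ∑ i, (∑ j, A i j) * x i ^ 2 = ∑ i ∈ S, (∑ j, A i j) * x i ^ 2 :=
    (hsupp _ fun i hi => by simp [hx i hi]).symm
  have hcross : ∑ i, ∑ j, A i j * (x i * x j) = ∑ i ∈ S, ∑ j ∈ S, A i j * (x i * x j) := by
    rw [← hsupp _ fun i hi => by simp [hx i hi]]
    exact sum_congr rfl fun i _ => (hsupp _ fun j hj => by simp [hx j hj]).symm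
  have hout : ∑ i ∈ S, (∑ j, A i j - ∑ j ∈ S, A i j) * x i ^ 2 ≤ (D - δ) * ∑ i ∈ S, x i ^ 2 := by
    rw [mul_sum]
    exact sum_le_sum fun i hi =>
      mul_le_mul_of_nonneg_right (by linarith [hD i hi, hδ i hi]) (sq_nonneg _)
  rw [dotProduct_weightedLaplacian_mulVec, hdeg, hcross, ← hsupp _ fun i hi => by simp [hx i hi],
    ← hsupp _ hx]
  simp only [sub_mul, sum_sub_distrib] at hout
  linarith [sum_sum_mul_sub_sq (fun i j => hA.apply i j) S x, sum_sum_mul_sub_sq_le ha S x]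

theorem dotProduct_weightedLaplacian_mulVec_le_of_eq_const (hA : A.IsSymm)
    (hnonneg : ∀ i j, 0 ≤ A i j) {a D δ : ℝ} (ha : ∀ i j, A i j ≤ a) {S : Finset ι}
    (hS : S.Nonempty) (hD : ∀ i ∈ S, ∑ j, A i j ≤ D) (hδ : ∀ i ∈ S, δ ≤ ∑ j ∈ S, A i j)
    {x : ι → ℝ} {c : ℝ} (hx : ∀ i ∉ S, x i = c) :
    x ⬝ᵥ weightedLaplacian A *ᵥ x ≤ (D + #S * a - δ) * (x ⬝ᵥ x) := by
  obtain ⟨i₀, hi₀⟩ := hS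
  have : Nonempty ι := ⟨i₀⟩
  set y : ι → ℝ := fun i => x i - c
  have hy : ∀ i ∉ S, y i = 0 := fun i hi => sub_eq_zero.2 (hx i hi)
  have hshift : x ⬝ᵥ weightedLaplacian A *ᵥ x = y ⬝ᵥ weightedLaplacian A *ᵥ y := by
    simp only [dotProduct_weightedLaplacian_mulVec_eq_sum_sq hA, y, sub_sub_sub_cancel_right]
  have hnorm : x ⬝ᵥ x = ∑ i, (y i + c) ^ 2 := by
    simp only [dotProduct, y, sub_add_cancel, sq]
  have hK : 0 ≤ D + #S * a - δ := by
    have hδD : δ ≤ D := (hδ i₀ hi₀).trans <| (sum_le_sum_of_subset_of_nonneg (subset_univ S)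
      fun j _ _ => hnonneg i₀ j).trans (hD i₀ hi₀)
    have ha₀ : 0 ≤ a := (hnonneg i₀ i₀).trans (ha i₀ i₀)
    nlinarith [Nat.cast_nonneg (α := ℝ) #S]
  rw [hshift, hnorm]
  exact le_mul_sum_add_const_sq hK (dotProduct_weightedLaplacian_mulVec_le_card hA ha y)
    (dotProduct_weightedLaplacian_mulVec_le_of_support hA ha hD hδ hy) c

end WeightedLaplacian

open Finset in
/-- Weighted upper bound: `λ_{m+1}(G) ≤ d_m + m·a - δ(G_{S_m})`, where `a` is the maximal
edge weight and `G_{S_m}` is the subgraph induced on the `m` vertices of smallest degree. -/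
theorem weighted_lap_eigenvalue_upper_bound (n m : ℕ) (hm : 1 ≤ m) (hmn : m ≤ n - 1)
    (A : Matrix (Fin n) (Fin n) ℝ) (hsymm : A.IsSymm)
    (hnonneg : ∀ i j, 0 ≤ A i j)
    (hmono : Monotone (fun i : Fin n => ∑ j, A i j))
    (a : ℝ) (ha : IsGreatest {x : ℝ | ∃ i j, A i j = x} a)
    (eigs : Fin n → ℝ) (heigs : Monotone eigs)
    (hroots : (Matrix.diagonal (fun i => ∑ j, A i j) - A).charpoly.roots
      = Finset.univ.val.map eigs) :
    eigs ⟨m, by omega⟩ ≤ (∑ j, A ⟨m - 1, by omega⟩ j) + m * a -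
      (Finset.univ.filter (fun i : Fin n => i.val ≤ m - 1)).inf'
        ⟨⟨m - 1, by omega⟩, by simp⟩
        (fun i => ∑ j ∈ Finset.univ.filter (fun j : Fin n => j.val ≤ m - 1), A i j) := by
  set S : Finset (Fin n) := univ.filter fun i => i.val ≤ m - 1 with hS
  have hS_card : #S = m := by
    have hSm : S = Iio ⟨m, by omega⟩ := by
      ext i
      simp only [hS, mem_filter, mem_univ, true_and, mem_Iio, Fin.lt_def]
      omega
    rw [hSm, Fin.card_Iio]
  have hS_ne : S.Nonempty := ⟨⟨m - 1, by omega⟩, by simp [hS]⟩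
  obtain ⟨V, hV_dim, hV_const⟩ :=
    exists_finrank_eq_card_add_one_of_notMem (K := ℝ) (S := S) (i₀ := ⟨m, by omega⟩)
      (by simp only [hS, mem_filter, mem_univ, true_and, not_le]; omega)
  refine (isHermitian_weightedLaplacian hsymm).le_of_lt_finrank heigs hroots (V := V) ?_
    (by rw [hV_dim, hS_card]; exact Nat.lt_succ_self m)
  intro x hx
  obtain ⟨c, hc⟩ := hV_const x hx
  have hle := dotProduct_weightedLaplacian_mulVec_le_of_eq_const hsymm hnonneg
    (fun i j => ha.2 ⟨i, j, rfl⟩) hS_ne (D := ∑ j, A ⟨m - 1, by omega⟩ j)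
    (δ := S.inf' hS_ne fun i => ∑ j ∈ S, A i j)
    (fun i hi => hmono (show i ≤ ⟨m - 1, by omega⟩ by simpa [hS, Fin.le_def] using hi))
    (fun i hi => inf'_le _ hi) hc
  rwa [hS_card] at hle
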